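/- Let R be a von Neumann regular ring and Q a von Neumann regular, right self-injective ring containing R as a subring with R essential in Q as a right R-module (Q the maximal right quotient ring of R). Let e, f be idempotents of R and g an idempotent of Q such that eQ ⊕ gQ = Q = fQ ⊕ gQ, and let e₁, f₁, g₁, g₂ ∈ Q satisfy ee₁ + gg₁ = 1 = ff₁ + gg₂. Then eR ⊕ (gQ ∩ R) = fR ⊕ (gQ ∩ R) if and only if e ∈ ee₁fR and f ∈ ff₁eR. -/

import Mathlib

/-! `u * u₁` is the projection of `Q` onto `uQ` along `gQ` as soon as `uQ ∩ gQ = 0` and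
`u * u₁ + g * w = 1`. Applying it to `e = f r + g q` gives `e = e e₁ f r`; conversely
`e = e e₁ f r` and `e e₁ = 1 - g g₁` rewrite `e x + g q` as `f (r x) + g (q - g₁ f r x)`,
whose second summand lies in `R` because the whole sum and `f r x` do. -/

/-- A ring `R` is von Neumann regular if for every `a ∈ R` there is `b ∈ R`
with `a = a * b * a`. -/
def IsVonNeumannRegularRing (R : Type*) [Ring R] : Prop :=
  ∀ a : R, ∃ b : R, a = a * b * a

/-- A subset `A` of `Q` is a right `R`-submodule set for a subring `R ≤ Q`:
it is an additive subgroup closed under right multiplication by elements of `R`. -/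
def IsRightSubmodSet {Q : Type*} [Ring Q] (R : Subring Q) (A : Set Q) : Prop :=
  0 ∈ A ∧ (∀ a ∈ A, ∀ b ∈ A, a + b ∈ A) ∧ (∀ a ∈ A, -a ∈ A) ∧
    ∀ a ∈ A, ∀ r ∈ R, a * r ∈ A

/-- `A` is essential in `B` as right `R`-modules (`A ⊆ B ⊆ Q`, `R` a subring of `Q`):
every nonzero right `R`-submodule of `B` has nonzero intersection with `A`. -/
def EssentialInSet {Q : Type*} [Ring Q] (R : Subring Q) (A B : Set Q) : Prop :=
  A ⊆ B ∧ ∀ X : Set Q, IsRightSubmodSet R X → X ⊆ B → (∃ x ∈ X, x ≠ 0) →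
    ∃ x ∈ X, x ∈ A ∧ x ≠ 0

/-- The set `uR + (gQ ∩ R)`. -/
def principalAddInterSubring {Q : Type*} [Ring Q] (R : Subring Q) (u g : Q) : Set Q :=
  {y : Q | ∃ a ∈ {y : Q | ∃ r ∈ R, y = u * r},
    ∃ b ∈ {z : Q | ∃ q : Q, z = g * q} ∩ (R : Set Q), y = a + b}

section

variable {Q : Type*} [Ring Q]

lemma mem_span_op_singleton {a x : Q} :
    x ∈ Submodule.span Qᵐᵒᵖ {a} ↔ ∃ q : Q, x = a * q := by
  rw [Submodule.mem_span_singleton]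
  constructor
  · rintro ⟨q, rfl⟩
    exact ⟨q.unop, rfl⟩
  · rintro ⟨q, rfl⟩
    exact ⟨MulOpposite.op q, rfl⟩

lemma eq_zero_of_span_inf_eq_bot {u g x : Q}
    (hd : Submodule.span Qᵐᵒᵖ {u} ⊓ Submodule.span Qᵐᵒᵖ {g} = ⊥)
    (hu : ∃ q, x = u * q) (hg : ∃ q, x = g * q) : x = 0 := by
  have hx : x ∈ Submodule.span Qᵐᵒᵖ {u} ⊓ Submodule.span Qᵐᵒᵖ {g} :=
    ⟨mem_span_op_singleton.2 hu, mem_span_op_singleton.2 hg⟩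
  rwa [hd, Submodule.mem_bot] at hx

lemma mul_mul_add_mul_eq_of_span_inf_eq_bot {u g u₁ w : Q}
    (hd : Submodule.span Qᵐᵒᵖ {u} ⊓ Submodule.span Qᵐᵒᵖ {g} = ⊥)
    (h : u * u₁ + g * w = 1) (x y : Q) :
    u * u₁ * (u * x + g * y) = u * x := by
  set z := u * x + g * y
  have hz : u * u₁ * z + g * w * z = z := by rw [← add_mul, h, one_mul]
  have hdiff : u * x - u * u₁ * z = 0 :=
    eq_zero_of_span_inf_eq_bot hd ⟨x - u₁ * z, by noncomm_ring⟩
      ⟨w * z - y, by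
        calc u * x - u * u₁ * z = z - u * u₁ * z - g * y := by simp only [z]; abel
          _ = g * w * z - g * y := by nth_rewrite 1 [← hz]; abel
          _ = g * (w * z - y) := by noncomm_ring⟩
  exact (sub_eq_zero.1 hdiff).symm

lemma mul_mul_self_of_span_inf_eq_bot {u g u₁ w : Q}
    (hd : Submodule.span Qᵐᵒᵖ {u} ⊓ Submodule.span Qᵐᵒᵖ {g} = ⊥)
    (h : u * u₁ + g * w = 1) : u * u₁ * u = u := by
  simpa using mul_mul_add_mul_eq_of_span_inf_eq_bot hd h 1 0

lemma mul_mul_mul_eq_zero_of_span_inf_eq_bot {u g u₁ w : Q}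
    (hd : Submodule.span Qᵐᵒᵖ {u} ⊓ Submodule.span Qᵐᵒᵖ {g} = ⊥)
    (h : u * u₁ + g * w = 1) (q : Q) : u * u₁ * (g * q) = 0 := by
  simpa using mul_mul_add_mul_eq_of_span_inf_eq_bot hd h 0 q

variable (R : Subring Q) {u v g : Q}

lemma self_mem_principalAddInterSubring : u ∈ principalAddInterSubring R u g :=
  ⟨u * 1, ⟨1, R.one_mem, rfl⟩, 0, ⟨⟨0, (mul_zero g).symm⟩, R.zero_mem⟩, by simp⟩

lemma exists_eq_mul_mul_of_mem_principalAddInterSubring {u₁ w : Q}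
    (hd : Submodule.span Qᵐᵒᵖ {u} ⊓ Submodule.span Qᵐᵒᵖ {g} = ⊥)
    (h : u * u₁ + g * w = 1) (hmem : u ∈ principalAddInterSubring R v g) :
    ∃ r ∈ R, u = u * u₁ * v * r := by
  obtain ⟨_, ⟨r, hr, rfl⟩, _, ⟨⟨q, rfl⟩, -⟩, huvq⟩ := hmem
  refine ⟨r, hr, ?_⟩
  calc u = u * u₁ * u := (mul_mul_self_of_span_inf_eq_bot hd h).symm
    _ = u * u₁ * (v * r) + u * u₁ * (g * q) := by rw [← mul_add, ← huvq]
    _ = u * u₁ * v * r := by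
      rw [mul_mul_mul_eq_zero_of_span_inf_eq_bot hd h, add_zero]
      simp only [mul_assoc]

lemma principalAddInterSubring_subset {u₁ w r : Q} (hu : u ∈ R) (hv : v ∈ R) (hr : r ∈ R)
    (h : u * u₁ + g * w = 1) (huv : u = u * u₁ * v * r) :
    principalAddInterSubring R u g ⊆ principalAddInterSubring R v g := by
  rintro _ ⟨_, ⟨x, hx, rfl⟩, _, ⟨⟨q, rfl⟩, hqR⟩, rfl⟩
  have hsum : u * x + g * q = v * (r * x) + g * (q - w * (v * (r * x))) :=
    calc u * x + g * q = u * u₁ * (v * (r * x)) + g * q := by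
          conv_lhs => rw [huv]
          noncomm_ring
      _ = (1 - g * w) * (v * (r * x)) + g * q := by rw [← h, add_sub_cancel_right]
      _ = v * (r * x) + g * (q - w * (v * (r * x))) := by noncomm_ring
  have hgR : g * (q - w * (v * (r * x))) ∈ R := by
    rw [eq_sub_of_add_eq' hsum.symm]
    exact R.sub_mem (R.add_mem (R.mul_mem hu hx) hqR) (R.mul_mem hv (R.mul_mem hr hx))
  exact ⟨_, ⟨r * x, R.mul_mem hr hx, rfl⟩, _, ⟨⟨_, rfl⟩, hgR⟩, hsum⟩

lemma principalAddInterSubring_eq_iff {u₁ v₁ w₁ w₂ : Q} (hu : u ∈ R) (hv : v ∈ R)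
    (hdu : Submodule.span Qᵐᵒᵖ {u} ⊓ Submodule.span Qᵐᵒᵖ {g} = ⊥)
    (hdv : Submodule.span Qᵐᵒᵖ {v} ⊓ Submodule.span Qᵐᵒᵖ {g} = ⊥)
    (h1 : u * u₁ + g * w₁ = 1) (h2 : v * v₁ + g * w₂ = 1) :
    principalAddInterSubring R u g = principalAddInterSubring R v g ↔
      (∃ r ∈ R, u = u * u₁ * v * r) ∧ ∃ r ∈ R, v = v * v₁ * u * r := by
  constructor
  · intro hEq
    exact ⟨exists_eq_mul_mul_of_mem_principalAddInterSubring R hdu h1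
        (hEq ▸ self_mem_principalAddInterSubring R),
      exists_eq_mul_mul_of_mem_principalAddInterSubring R hdv h2
        (hEq ▸ self_mem_principalAddInterSubring R)⟩
  · rintro ⟨⟨r, hr, huv⟩, ⟨s, hs, hvu⟩⟩
    exact (principalAddInterSubring_subset R hu hv hr h1 huv).antisymm
      (principalAddInterSubring_subset R hv hu hs h2 hvu)

end

theorem eR_plus_gQcapR_eq_iff_general
    (Q : Type*) [Ring Q]
    (R : Subring Q)
    (e f : ↥R)
    (g : Q)
    (hde : Submodule.span Qᵐᵒᵖ {(e : Q)} ⊓ Submodule.span Qᵐᵒᵖ {g} = ⊥)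
    (hdf : Submodule.span Qᵐᵒᵖ {(f : Q)} ⊓ Submodule.span Qᵐᵒᵖ {g} = ⊥)
    (e₁ f₁ g₁ g₂ : Q)
    (h1 : (e : Q) * e₁ + g * g₁ = 1) (h2 : (f : Q) * f₁ + g * g₂ = 1) :
    ({y : Q | ∃ a ∈ {y : Q | ∃ r ∈ R, y = (e : Q) * r},
        ∃ b ∈ {z : Q | ∃ q : Q, z = g * q} ∩ (R : Set Q), y = a + b} =
      {y : Q | ∃ a ∈ {y : Q | ∃ r ∈ R, y = (f : Q) * r},
        ∃ b ∈ {z : Q | ∃ q : Q, z = g * q} ∩ (R : Set Q), y = a + b}) ↔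
    ((∃ r ∈ R, (e : Q) = (e : Q) * e₁ * (f : Q) * r) ∧
      (∃ r ∈ R, (f : Q) = (f : Q) * f₁ * (e : Q) * r)) :=
  principalAddInterSubring_eq_iff R e.2 f.2 hde hdf h1 h2

/-- Let `R` be a von Neumann regular subring of its maximal right quotient ring `Q`
(a von Neumann regular right self-injective ring in which `R` is essential as a right
`R`-module).  Let `e, f` be idempotents of `R` and `g` an idempotent of `Q` with
`eQ ⊕ gQ = Q = fQ ⊕ gQ`, and let `e₁, f₁, g₁, g₂ ∈ Q` satisfy `ee₁ + gg₁ = 1 = ff₁ + gg₂`.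
Then `eR ⊕ (gQ ∩ R) = fR ⊕ (gQ ∩ R)` if and only if `e ∈ ee₁fR` and `f ∈ ff₁eR`. -/
theorem eR_plus_gQcapR_eq_iff
    (Q : Type*) [Ring Q] (hQreg : IsVonNeumannRegularRing Q)
    (hQinj : Module.Injective Qᵐᵒᵖ Q)
    (R : Subring Q) (hRreg : IsVonNeumannRegularRing ↥R)
    (hRess : EssentialInSet R (R : Set Q) Set.univ)
    (e f : ↥R) (he : IsIdempotentElem e) (hf : IsIdempotentElem f)
    (g : Q) (hg : IsIdempotentElem g)
    (hde : Submodule.span Qᵐᵒᵖ {(e : Q)} ⊓ Submodule.span Qᵐᵒᵖ {g} = ⊥)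
    (hse : Submodule.span Qᵐᵒᵖ {(e : Q)} ⊔ Submodule.span Qᵐᵒᵖ {g} = ⊤)
    (hdf : Submodule.span Qᵐᵒᵖ {(f : Q)} ⊓ Submodule.span Qᵐᵒᵖ {g} = ⊥)
    (hsf : Submodule.span Qᵐᵒᵖ {(f : Q)} ⊔ Submodule.span Qᵐᵒᵖ {g} = ⊤)
    (e₁ f₁ g₁ g₂ : Q)
    (h1 : (e : Q) * e₁ + g * g₁ = 1) (h2 : (f : Q) * f₁ + g * g₂ = 1) :
    ({y : Q | ∃ a ∈ {y : Q | ∃ r ∈ R, y = (e : Q) * r},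
        ∃ b ∈ {z : Q | ∃ q : Q, z = g * q} ∩ (R : Set Q), y = a + b} =
      {y : Q | ∃ a ∈ {y : Q | ∃ r ∈ R, y = (f : Q) * r},
        ∃ b ∈ {z : Q | ∃ q : Q, z = g * q} ∩ (R : Set Q), y = a + b}) ↔
    ((∃ r ∈ R, (e : Q) = (e : Q) * e₁ * (f : Q) * r) ∧
      (∃ r ∈ R, (f : Q) = (f : Q) * f₁ * (e : Q) * r)) :=
  eR_plus_gQcapR_eq_iff_general Q R e f g hde hdf e₁ f₁ g₁ g₂ h1 h2
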